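/- With Aluffi's notations in a commutative graded algebra: for α = Σ_j α^j and an invertible element c = 1 + c_1 with c_1 of degree 1, the duality operation α^∨ = Σ_j (−1)^j α^j satisfies (α ⊗ c)^∨ = α^∨ ⊗ c^∨, where c^∨ = 1 − c_1 and α ⊗ c = Σ_j α^j (1+c_1)^{−j}. -/
import Mathlib


open DirectSum

/-- Aluffi's tensor operation `α ⊗ L := ∑_j α^j · c(L)^{-j}` in a graded algebra,
truncated at degree `N` (we assume the grading vanishes in degrees `≥ N`). -/
def aluffiTensor {A : Type*} [CommRing A] [Algebra ℚ A]
    (𝒜 : ℕ → Submodule ℚ A) [GradedAlgebra 𝒜] (N : ℕ) (α : A) (u : Aˣ) : A :=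
  ∑ j ∈ Finset.range N, (DirectSum.decompose 𝒜 α j : A) * ((u⁻¹ : Aˣ) : A) ^ j

/-- Aluffi's duality operation `α^∨ := ∑_j (-1)^j α^j`. -/
def aluffiDual {A : Type*} [CommRing A] [Algebra ℚ A]
    (𝒜 : ℕ → Submodule ℚ A) [GradedAlgebra 𝒜] (N : ℕ) (α : A) : A :=
  ∑ j ∈ Finset.range N, (-1 : A) ^ j * (DirectSum.decompose 𝒜 α j : A)

noncomputable def aluffiSigma {A : Type*} [CommRing A] [Algebra ℚ A]
    (𝒜 : ℕ → Submodule ℚ A) [GradedAlgebra 𝒜] : A →+* A :=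
  (DirectSum.toSemiring
    (fun i => (AddMonoidHom.mulLeft ((-1 : A) ^ i)).comp (𝒜 i).subtype.toAddMonoidHom)
    (by simp)
    (by
      intro i j ai aj
      simp [SetLike.coe_gMul, pow_add]
      ring)).comp
    (DirectSum.decomposeRingEquiv 𝒜 : A →+* ⨁ i, 𝒜 i)

lemma aluffiSigma_apply {A : Type*} [CommRing A] [Algebra ℚ A]
    (𝒜 : ℕ → Submodule ℚ A) [GradedAlgebra 𝒜] (x : A) :
    aluffiSigma 𝒜 x =
      (DirectSum.toSemiring
        (fun i => (AddMonoidHom.mulLeft ((-1 : A) ^ i)).comp (𝒜 i).subtype.toAddMonoidHom)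
        (by simp)
        (by
          intro i j ai aj
          simp [SetLike.coe_gMul, pow_add]
          ring)) (DirectSum.decompose 𝒜 x) := rfl

lemma aluffiSigma_coe {A : Type*} [CommRing A] [Algebra ℚ A]
    (𝒜 : ℕ → Submodule ℚ A) [GradedAlgebra 𝒜] {i : ℕ} {x : A} (hx : x ∈ 𝒜 i) :
    aluffiSigma 𝒜 x = (-1 : A) ^ i * x := by
  have hx2 : x = ((⟨x, hx⟩ : 𝒜 i) : A) := rfl
  rw [aluffiSigma_apply, hx2, DirectSum.decompose_coe, DirectSum.toSemiring_of]
  simp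

lemma sum_decompose_range {A : Type*} [CommRing A] [Algebra ℚ A]
    (𝒜 : ℕ → Submodule ℚ A) [GradedAlgebra 𝒜] (N : ℕ)
    (hN : ∀ j, N ≤ j → ∀ x ∈ 𝒜 j, x = 0) (x : A) :
    ∑ j ∈ Finset.range N, (DirectSum.decompose 𝒜 x j : A) = x := by
  classical
  have h := DirectSum.sum_support_decompose 𝒜 x
  conv_rhs => rw [← h]
  refine (Finset.sum_subset ?_ ?_).symm
  · intro j hj
    simp only [DFinsupp.mem_support_iff] at hj
    simp only [Finset.mem_range]
    by_contra hlt
    exact hj (Subtype.ext (hN j (le_of_not_gt hlt) _ (decompose 𝒜 x j).2))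
  · intro j _ hj
    simp only [DFinsupp.mem_support_iff, not_not] at hj
    rw [hj]; simp

lemma aluffiDual_eq_sigma {A : Type*} [CommRing A] [Algebra ℚ A]
    (𝒜 : ℕ → Submodule ℚ A) [GradedAlgebra 𝒜] (N : ℕ)
    (hN : ∀ j, N ≤ j → ∀ x ∈ 𝒜 j, x = 0) (x : A) :
    aluffiDual 𝒜 N x = aluffiSigma 𝒜 x := by
  have : aluffiSigma 𝒜 x = aluffiSigma 𝒜 (∑ j ∈ Finset.range N, (DirectSum.decompose 𝒜 x j : A)) := by
    rw [sum_decompose_range 𝒜 N hN x]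
  rw [this, map_sum, aluffiDual]
  refine Finset.sum_congr rfl fun j _ => ?_
  rw [aluffiSigma_coe 𝒜 (decompose 𝒜 x j).2]

/-- Compatibility of Aluffi's duality with the tensor operation:
`(α ⊗ (1+c₁))^∨ = α^∨ ⊗ (1 - c₁)` in a graded `ℚ`-algebra whose grading vanishes
in degrees `≥ N`, where `c₁` has degree 1. -/
theorem aluffiDual_tensor {A : Type*} [CommRing A] [Algebra ℚ A]
    (𝒜 : ℕ → Submodule ℚ A) [GradedAlgebra 𝒜] (N : ℕ)
    (hN : ∀ j, N ≤ j → ∀ x ∈ 𝒜 j, x = 0)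
    (α : A) (c₁ : A) (hc : c₁ ∈ 𝒜 1)
    (u u' : Aˣ) (hu : (u : A) = 1 + c₁) (hu' : (u' : A) = 1 - c₁) :
    aluffiDual 𝒜 N (aluffiTensor 𝒜 N α u) =
      aluffiTensor 𝒜 N (aluffiDual 𝒜 N α) u' := by
  set σ := aluffiSigma 𝒜 with hσ
  -- σ maps u to u'
  have hσu : σ (u : A) = (u' : A) := by
    rw [hu, hu', map_add, map_one, aluffiSigma_coe 𝒜 hc]
    ring
  have hmap : Units.map (σ : A →* A) u = u' := by
    ext
    simpa using hσu
  have hσuinv : σ ((u⁻¹ : Aˣ) : A) = ((u'⁻¹ : Aˣ) : A) := by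
    have : Units.map (σ : A →* A) u⁻¹ = u'⁻¹ := by rw [map_inv, hmap]
    calc σ ((u⁻¹ : Aˣ) : A) = ((Units.map (σ : A →* A) u⁻¹ : Aˣ) : A) := rfl
      _ = ((u'⁻¹ : Aˣ) : A) := by rw [this]
  -- decompose of the dual
  have hdec : ∀ j ∈ Finset.range N,
      (DirectSum.decompose 𝒜 (aluffiDual 𝒜 N α) j : A)
        = (-1 : A) ^ j * (DirectSum.decompose 𝒜 α j : A) := by
    intro j hj
    rw [aluffiDual, DirectSum.decompose_sum]
    have : ∀ k ∈ Finset.range N,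
        (((DirectSum.decompose 𝒜 ((-1 : A) ^ k * (DirectSum.decompose 𝒜 α k : A))) j : 𝒜 j) : A)
          = if k = j then (-1 : A) ^ j * (DirectSum.decompose 𝒜 α j : A) else 0 := by
      intro k _
      have hk : (-1 : A) ^ k * (DirectSum.decompose 𝒜 α k : A) ∈ 𝒜 k := by
        have : ((-1 : ℚ) ^ k) • ((DirectSum.decompose 𝒜 α k : A)) ∈ 𝒜 k :=
          Submodule.smul_mem _ _ (DirectSum.decompose 𝒜 α k).2
        simpa [Algebra.smul_def, map_pow] using this
      by_cases h : k = j
      · subst h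
        rw [DirectSum.decompose_of_mem_same 𝒜 hk, if_pos rfl]
      · rw [DirectSum.decompose_of_mem_ne 𝒜 hk h, if_neg h]
    rw [DFinsupp.finset_sum_apply]
    push_cast
    rw [Finset.sum_congr rfl this, Finset.sum_ite_eq' (Finset.range N) j
      (fun _ => (-1 : A) ^ j * (DirectSum.decompose 𝒜 α j : A)), if_pos hj]
  rw [aluffiDual_eq_sigma 𝒜 N hN, aluffiTensor, map_sum, aluffiTensor]
  refine Finset.sum_congr rfl fun j hj => ?_
  rw [hdec j hj, map_mul, map_pow, hσuinv, aluffiSigma_coe 𝒜 (decompose 𝒜 α j).2]
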